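/- Let Ω ⊆ ℝ² be a long domain, suppose the set S := {j ∈ ℤ_{≥0} : 1 + ‖(1,j)‖_Ω^* < ‖(1,j+2)‖_Ω^*} is nonempty, and let J := min S. Then for all positive integers k and ℓ: (1) if k − 2ℓ + 1 ≥ J, then G_k^ℓ(Ω) = min{k, (ℓ−1) + ‖(1, k−2ℓ+1)‖_Ω^*}; (2) if k − 2ℓ + 1 < J and k ≤ J, then G_k^ℓ(Ω) = k; (3) if k − 2ℓ + 1 < J, k > J, and k − J is odd, then G_k^ℓ(Ω) = min{k, (k−J−1)/2 + ‖(1,J)‖_Ω^*}; (4) if k − 2ℓ + 1 < J, k > J, and k − J is even, then G_k^ℓ(Ω) = min{k, (k−J−2)/2 + ‖(1,J+1)‖_Ω^*}. -/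
import Mathlib


open scoped BigOperators

/-- The "dual norm" `‖v‖_Ω^* = max_{w ∈ Ω} ⟨v,w⟩` of a vector `v ∈ ℝ²`
with respect to a (nonempty compact) set `Ω ⊆ ℝ²`. -/
noncomputable def dualNorm (Ω : Set (ℝ × ℝ)) (v : ℝ × ℝ) : ℝ :=
  sSup ((fun w : ℝ × ℝ => v.1 * w.1 + v.2 * w.2) '' Ω)

/-- The dual norm of a pair of nonnegative integers. -/
noncomputable def pairNorm (Ω : Set (ℝ × ℝ)) (p : ℕ × ℕ) : ℝ :=
  dualNorm Ω ((p.1 : ℝ), (p.2 : ℝ))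

/-- Total dual norm of a finite multiset of pairs. -/
noncomputable def totalNorm (Ω : Set (ℝ × ℝ)) (P : Multiset (ℕ × ℕ)) : ℝ :=
  (P.map (pairNorm Ω)).sum

/-- `(k,ℓ)`-admissibility of a finite multiset of pairs in `ℤ_{≥0}² \ {(0,0)}`:
the index condition `Σ (i+j) + q − 1 = k` (written additively), weak permissibility,
and length at most `ℓ ∈ ℕ∞`. -/
def Admissible (k : ℕ) (ℓ : ℕ∞) (P : Multiset (ℕ × ℕ)) : Prop :=
  (∀ p ∈ P, p ≠ (0, 0)) ∧
  (P.map (fun p => p.1 + p.2)).sum + Multiset.card P = k + 1 ∧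
  (2 ≤ Multiset.card P → (∃ p ∈ P, p.1 ≠ 0) ∧ (∃ p ∈ P, p.2 ≠ 0)) ∧
  (Multiset.card P : ℕ∞) ≤ ℓ

/-- `(≥k,ℓ)`-admissibility: same as `(k,ℓ)`-admissibility with the index condition
relaxed to `Σ (i+j) + q − 1 ≥ k`. -/
def GeAdmissible (k : ℕ) (ℓ : ℕ∞) (P : Multiset (ℕ × ℕ)) : Prop :=
  (∀ p ∈ P, p ≠ (0, 0)) ∧
  k + 1 ≤ (P.map (fun p => p.1 + p.2)).sum + Multiset.card P ∧
  (2 ≤ Multiset.card P → (∃ p ∈ P, p.1 ≠ 0) ∧ (∃ p ∈ P, p.2 ≠ 0)) ∧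
  (Multiset.card P : ℕ∞) ≤ ℓ

/-- The combinatorial capacity `G_k^ℓ(Ω) = min_{P ∈ 𝒫_{k,ℓ}} Σ_{(i,j)∈P} ‖(i,j)‖_Ω^*`. -/
noncomputable def Gcap (Ω : Set (ℝ × ℝ)) (k : ℕ) (ℓ : ℕ∞) : ℝ :=
  sInf (totalNorm Ω '' {P | Admissible k ℓ P})

/-- A moment domain: a nonempty compact convex subset of the first quadrant of `ℝ²`
which is closed under coordinatewise decrease (the moment image of a 4-dimensional
convex toric domain). -/
def MomentDomain (Ω : Set (ℝ × ℝ)) : Prop :=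
  Ω.Nonempty ∧ IsCompact Ω ∧ Convex ℝ Ω ∧
  (∀ p ∈ Ω, 0 ≤ p.1 ∧ 0 ≤ p.2) ∧
  (∀ p ∈ Ω, ∀ q : ℝ × ℝ, 0 ≤ q.1 → q.1 ≤ p.1 → 0 ≤ q.2 → q.2 ≤ p.2 → q ∈ Ω)

/-- A long domain: a compact convex subset of the first quadrant containing the unit
square `[0,1] × [0,1]` and with maximal `y`-coordinate equal to `1`. -/
def LongDomain (Ω : Set (ℝ × ℝ)) : Prop :=
  IsCompact Ω ∧ Convex ℝ Ω ∧
  (∀ p ∈ Ω, 0 ≤ p.1 ∧ 0 ≤ p.2) ∧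
  Set.Icc ((0 : ℝ), (0 : ℝ)) (1, 1) ⊆ Ω ∧
  (∀ p ∈ Ω, p.2 ≤ 1)

section Aux

variable {Ω : Set (ℝ × ℝ)}

lemma LongDomain.square (hΩ : LongDomain Ω) {a b : ℝ} (ha0 : 0 ≤ a) (ha1 : a ≤ 1)
    (hb0 : 0 ≤ b) (hb1 : b ≤ 1) : (a, b) ∈ Ω := by
  apply hΩ.2.2.2.1
  constructor
  · exact ⟨ha0, hb0⟩
  · exact ⟨ha1, hb1⟩

lemma LongDomain.nonempty (hΩ : LongDomain Ω) : Ω.Nonempty :=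
  ⟨(0, 0), hΩ.square le_rfl zero_le_one le_rfl zero_le_one⟩

lemma exists_max (hΩ : LongDomain Ω) (v : ℝ × ℝ) :
    ∃ w ∈ Ω, dualNorm Ω v = v.1 * w.1 + v.2 * w.2 ∧
      ∀ u ∈ Ω, v.1 * u.1 + v.2 * u.2 ≤ dualNorm Ω v := by
  have hc : Continuous fun w : ℝ × ℝ => v.1 * w.1 + v.2 * w.2 :=
    (continuous_const.mul continuous_fst).add (continuous_const.mul continuous_snd)
  have himg : IsCompact ((fun w : ℝ × ℝ => v.1 * w.1 + v.2 * w.2) '' Ω) := hΩ.1.image hc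
  have hnem : ((fun w : ℝ × ℝ => v.1 * w.1 + v.2 * w.2) '' Ω).Nonempty := hΩ.nonempty.image _
  obtain ⟨w, hw, hweq⟩ := himg.sSup_mem hnem
  exact ⟨w, hw, hweq.symm, fun u hu => le_csSup himg.bddAbove ⟨u, hu, rfl⟩⟩

lemma pairNorm_eq (i j : ℕ) : pairNorm Ω (i, j) = dualNorm Ω ((i : ℝ), (j : ℝ)) := rfl

lemma exists_max' (hΩ : LongDomain Ω) (i j : ℕ) :
    ∃ w, w ∈ Ω ∧ pairNorm Ω (i, j) = i * w.1 + j * w.2 ∧ 0 ≤ w.1 ∧ 0 ≤ w.2 ∧ w.2 ≤ 1 := by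
  obtain ⟨w, hw, heq, -⟩ := exists_max hΩ ((i : ℝ), (j : ℝ))
  exact ⟨w, hw, heq, (hΩ.2.2.1 w hw).1, (hΩ.2.2.1 w hw).2, hΩ.2.2.2.2 w hw⟩

lemma le_pairNorm (hΩ : LongDomain Ω) (i j : ℕ) {u : ℝ × ℝ} (hu : u ∈ Ω) :
    i * u.1 + j * u.2 ≤ pairNorm Ω (i, j) := by
  obtain ⟨w, hw, heq, hub⟩ := exists_max hΩ ((i : ℝ), (j : ℝ))
  exact hub u hu

lemma pairNorm_ge (hΩ : LongDomain Ω) (i j : ℕ) : (i : ℝ) + j ≤ pairNorm Ω (i, j) := by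
  have h11 : ((1 : ℝ), (1 : ℝ)) ∈ Ω := hΩ.square zero_le_one le_rfl zero_le_one le_rfl
  simpa using le_pairNorm hΩ i j h11

lemma pairNorm_zero (hΩ : LongDomain Ω) (j : ℕ) : pairNorm Ω (0, j) = (j : ℝ) := by
  obtain ⟨w, hw, heq, h1, h2, h3⟩ := exists_max' hΩ 0 j
  have hge := pairNorm_ge hΩ 0 j
  have : (j : ℝ) * w.2 ≤ j := by
    nlinarith [Nat.cast_nonneg (α := ℝ) j]
  push_cast at heq hge ⊢
  rw [heq]
  linarith

lemma f_step (hΩ : LongDomain Ω) (j : ℕ) :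
    pairNorm Ω (1, j + 1) ≤ pairNorm Ω (1, j) + 1 := by
  obtain ⟨w, hw, heq, h1, h2, h3⟩ := exists_max' hΩ 1 (j + 1)
  have hle := le_pairNorm hΩ 1 j hw
  rw [heq]
  push_cast
  push_cast at hle
  linarith

lemma f_le_add (hΩ : LongDomain Ω) (a s : ℕ) :
    pairNorm Ω (1, a + s) ≤ pairNorm Ω (1, a) + s := by
  induction s with
  | zero => simp
  | succ n ih =>
    have h1 : a + (n + 1) = (a + n) + 1 := by omega
    rw [h1]
    have := f_step hΩ (a + n)
    push_cast
    linarith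

lemma f_convex (hΩ : LongDomain Ω) (j : ℕ) :
    2 * pairNorm Ω (1, j + 1) ≤ pairNorm Ω (1, j) + pairNorm Ω (1, j + 2) := by
  obtain ⟨w, hw, heq, h1, h2, h3⟩ := exists_max' hΩ 1 (j + 1)
  have ha := le_pairNorm hΩ 1 j hw
  have hb := le_pairNorm hΩ 1 (j + 2) hw
  rw [heq]
  push_cast at *
  linarith

lemma pairNorm_part (hΩ : LongDomain Ω) {i : ℕ} (j : ℕ) (hi : 1 ≤ i) :
    (i : ℝ) - 1 + pairNorm Ω (1, j) ≤ pairNorm Ω (i, j) := by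
  obtain ⟨w, hw, heq, h1, h2, h3⟩ := exists_max' hΩ 1 j
  have hge := pairNorm_ge hΩ 1 j
  have hw1 : 1 ≤ w.1 := by
    have : (j : ℝ) * w.2 ≤ j := by nlinarith [Nat.cast_nonneg (α := ℝ) j]
    push_cast at heq hge
    linarith
  have hle := le_pairNorm hΩ i j hw
  have hi' : (1 : ℝ) ≤ (i : ℝ) := by exact_mod_cast hi
  rw [heq]
  push_cast at *
  nlinarith [mul_le_mul_of_nonneg_left hw1 (by linarith : (0:ℝ) ≤ (i:ℝ) - 1)]

lemma totalNorm_cons (p : ℕ × ℕ) (P : Multiset (ℕ × ℕ)) :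
    totalNorm Ω (p ::ₘ P) = pairNorm Ω p + totalNorm Ω P := by
  simp [totalNorm]

lemma sum_le_totalNorm (hΩ : LongDomain Ω) (P : Multiset (ℕ × ℕ)) :
    (((P.map fun p => p.1 + p.2).sum : ℕ) : ℝ) ≤ totalNorm Ω P := by
  induction P using Multiset.induction_on with
  | empty => simp [totalNorm]
  | cons a s ih =>
    rw [totalNorm_cons, Multiset.map_cons, Multiset.sum_cons, Nat.cast_add]
    have h : ((a.1 + a.2 : ℕ) : ℝ) ≤ pairNorm Ω a := by
      push_cast
      exact pairNorm_ge hΩ a.1 a.2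
    exact add_le_add h ih

lemma totalNorm_nonneg (hΩ : LongDomain Ω) (P : Multiset (ℕ × ℕ)) :
    0 ≤ totalNorm Ω P :=
  le_trans (Nat.cast_nonneg _) (sum_le_totalNorm hΩ P)

lemma card_le_sum (P : Multiset (ℕ × ℕ)) (h : ∀ p ∈ P, p ≠ (0, 0)) :
    Multiset.card P ≤ (P.map fun p => p.1 + p.2).sum := by
  induction P using Multiset.induction_on with
  | empty => simp
  | cons a s ih =>
    have ha := h a (Multiset.mem_cons_self a s)
    have h1 : 1 ≤ a.1 + a.2 := by
      rcases a with ⟨x, y⟩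
      simp only [ne_eq, Prod.mk.injEq] at ha
      omega
    have := ih fun p hp => h p (Multiset.mem_cons_of_mem hp)
    simp only [Multiset.map_cons, Multiset.sum_cons, Multiset.card_cons]
    omega

end Aux

section Aux2

variable {Ω : Set (ℝ × ℝ)}

lemma total_lb (hΩ : LongDomain Ω) {k q : ℕ} {P : Multiset (ℕ × ℕ)}
    (hP0 : ∀ p ∈ P, p ≠ (0, 0))
    (hidx : (P.map fun p => p.1 + p.2).sum + Multiset.card P = k + 1)
    (hq : Multiset.card P = q) {p0 : ℕ × ℕ} (hp0 : p0 ∈ P) (hi : p0.1 ≠ 0) :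
    (q : ℝ) - 1 + pairNorm Ω (1, k + 1 - 2 * q) ≤ totalNorm Ω P := by
  obtain ⟨P', rfl⟩ := Multiset.exists_cons_of_mem hp0
  have hcs : Multiset.card P' ≤ (P'.map fun p => p.1 + p.2).sum :=
    card_le_sum P' fun p hp => hP0 p (Multiset.mem_cons_of_mem hp)
  simp only [Multiset.map_cons, Multiset.sum_cons, Multiset.card_cons] at hidx
  have hcard : Multiset.card P' + 1 = q := by
    simpa using hq
  set B := (P'.map fun p => p.1 + p.2).sum with hB
  have h2q : 2 * q ≤ k + 1 := by omega
  have hj : p0.2 ≤ k + 1 - 2 * q := by omega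
  set m := k + 1 - 2 * q with hm
  have hd : (m - p0.2) + p0.2 = m := by omega
  have hmq : m + 2 * q = k + 1 := by omega
  -- f m ≤ f p0.2 + (m - p0.2)
  have hf : pairNorm Ω (1, m) ≤ pairNorm Ω (1, p0.2) + ((m - p0.2 : ℕ) : ℝ) := by
    have := f_le_add hΩ p0.2 (m - p0.2)
    rw [show p0.2 + (m - p0.2) = m by omega] at this
    exact this
  have hpart : (p0.1 : ℝ) - 1 + pairNorm Ω (1, p0.2) ≤ pairNorm Ω p0 := by
    have := pairNorm_part hΩ (i := p0.1) p0.2 (Nat.one_le_iff_ne_zero.2 hi)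
    exact this
  have hrest := sum_le_totalNorm hΩ P'
  rw [totalNorm_cons]
  -- cast the nat equations
  have c1 : (p0.1 : ℝ) + p0.2 + B + q = k + 1 := by
    have : p0.1 + p0.2 + B + q = k + 1 := by omega
    exact_mod_cast this
  have c2 : ((m - p0.2 : ℕ) : ℝ) + p0.2 = m := by exact_mod_cast hd
  have c3 : (m : ℝ) + 2 * q = k + 1 := by exact_mod_cast hmq
  linarith

lemma totalNorm_single (hΩ : LongDomain Ω) (k : ℕ) :
    totalNorm Ω {(0, k)} = (k : ℝ) := by
  rw [show ({(0, k)} : Multiset (ℕ × ℕ)) = (0, k) ::ₘ 0 from rfl, totalNorm_cons]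
  simp [totalNorm, pairNorm_zero hΩ]

lemma admissible_single {k : ℕ} (ℓ : ℕ∞) (_hk : 1 ≤ k) (hℓ : 1 ≤ ℓ) :
    Admissible k ℓ {(0, k)} := by
  refine ⟨?_, ?_, ?_, ?_⟩
  · intro p hp
    rw [Multiset.mem_singleton] at hp
    subst hp
    simp only [ne_eq, Prod.mk.injEq]
    omega
  · simp
  · intro h
    simp at h
  · simpa using hℓ

lemma bddBelow_tn (hΩ : LongDomain Ω) (s : Set (Multiset (ℕ × ℕ))) :
    BddBelow (totalNorm Ω '' s) := by
  refine ⟨0, ?_⟩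
  rintro x ⟨P, -, rfl⟩
  exact totalNorm_nonneg hΩ P

lemma Gcap_le (hΩ : LongDomain Ω) {k : ℕ} {ℓ : ℕ∞} {P : Multiset (ℕ × ℕ)}
    (h : Admissible k ℓ P) : Gcap Ω k ℓ ≤ totalNorm Ω P :=
  csInf_le (bddBelow_tn hΩ _) ⟨P, h, rfl⟩

lemma le_Gcap (hΩ : LongDomain Ω) {k : ℕ} {ℓ : ℕ∞} {c : ℝ} (hk : 1 ≤ k) (hℓ : 1 ≤ ℓ)
    (h : ∀ P, Admissible k ℓ P → c ≤ totalNorm Ω P) : c ≤ Gcap Ω k ℓ := by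
  apply le_csInf
  · exact ⟨_, ⟨{(0, k)}, admissible_single ℓ hk hℓ, rfl⟩⟩
  · rintro x ⟨P, hP, rfl⟩
    exact h P hP

lemma admissible_candidate {k q : ℕ} (ℓ : ℕ∞) (h2q : 2 * q ≤ k + 1) (hq1 : 1 ≤ q)
    (hqℓ : (q : ℕ∞) ≤ ℓ) :
    Admissible k ℓ ((1, k + 1 - 2 * q) ::ₘ Multiset.replicate (q - 1) (0, 1)) := by
  have hcard : Multiset.card ((1, k + 1 - 2 * q) ::ₘ Multiset.replicate (q - 1) (0, 1)) = q := by
    simp [Multiset.card_replicate]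
    omega
  refine ⟨?_, ?_, ?_, ?_⟩
  · intro p hp
    rcases Multiset.mem_cons.1 hp with rfl | hp
    · simp
    · rw [Multiset.eq_of_mem_replicate hp]
      simp
  · simp only [Multiset.map_cons, Multiset.sum_cons, Multiset.map_replicate,
      Multiset.sum_replicate, hcard, smul_eq_mul]
    omega
  · intro hq2
    rw [hcard] at hq2
    refine ⟨⟨(1, k + 1 - 2 * q), Multiset.mem_cons_self _ _, by simp⟩,
      ⟨(0, 1), Multiset.mem_cons_of_mem ?_, by simp⟩⟩
    rw [Multiset.mem_replicate]
    exact ⟨by omega, rfl⟩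
  · rw [hcard]
    exact hqℓ

lemma totalNorm_candidate (hΩ : LongDomain Ω) (m n : ℕ) :
    totalNorm Ω ((1, m) ::ₘ Multiset.replicate n (0, 1)) = pairNorm Ω (1, m) + n := by
  rw [totalNorm_cons]
  congr 1
  simp only [totalNorm, Multiset.map_replicate, Multiset.sum_replicate, smul_eq_mul,
    pairNorm_zero hΩ 1]
  simp

end Aux2

/-- the computation formula for `G_k^ℓ` of a long domain in terms of the
transition value `J` (cases written with the index condition `k − 2ℓ + 1 ≥ J`
cross-multiplied as `2ℓ + J ≤ k + 1`, etc., to avoid natural subtraction). -/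
theorem stmt_5 (Ω : Set (ℝ × ℝ)) (hΩ : LongDomain Ω)
    (S : Set ℕ)
    (hS : S = {j : ℕ | 1 + pairNorm Ω (1, j) < pairNorm Ω (1, j + 2)})
    (hne : S.Nonempty) (J : ℕ) (hJ : J = sInf S)
    (k ℓ : ℕ) (hk : 1 ≤ k) (hℓ : 1 ≤ ℓ) :
    (2 * ℓ + J ≤ k + 1 →
      Gcap Ω k (ℓ : ℕ∞) =
        min (k : ℝ) ((ℓ : ℝ) - 1 + pairNorm Ω (1, k + 1 - 2 * ℓ))) ∧
    (k + 1 < 2 * ℓ + J → k ≤ J → Gcap Ω k (ℓ : ℕ∞) = k) ∧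
    (k + 1 < 2 * ℓ + J → J < k → Odd (k - J) →
      Gcap Ω k (ℓ : ℕ∞) =
        min (k : ℝ) (((k : ℝ) - J - 1) / 2 + pairNorm Ω (1, J))) ∧
    (k + 1 < 2 * ℓ + J → J < k → Even (k - J) →
      Gcap Ω k (ℓ : ℕ∞) =
        min (k : ℝ) (((k : ℝ) - J - 2) / 2 + pairNorm Ω (1, J + 1))) := by
  have hltop : (1 : ℕ∞) ≤ (ℓ : ℕ∞) := by exact_mod_cast hℓ
  -- basic facts about S and J
  have hJS : J ∈ S := hJ ▸ Nat.sInf_mem hne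
  have hdown : ∀ m, m < J → pairNorm Ω (1, m + 2) ≤ pairNorm Ω (1, m) + 1 := by
    intro m hm
    have h1 : m ∉ S := by
      rw [hJ] at hm
      exact Nat.notMem_of_lt_sInf hm
    rw [hS] at h1
    simp only [Set.mem_setOf_eq, not_lt] at h1
    linarith
  have hup0 : ∀ m, m ∈ S → m + 1 ∈ S := by
    intro m hm
    rw [hS] at hm ⊢
    simp only [Set.mem_setOf_eq] at hm ⊢
    have c1 := f_convex hΩ m
    have c2 := f_convex hΩ (m + 1)
    rw [show m + 1 + 1 = m + 2 by omega] at c2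
    linarith
  have hupS : ∀ m, J ≤ m → m ∈ S := by
    intro m hm
    induction m, hm using Nat.le_induction with
    | base => exact hJS
    | succ n hn ih => exact hup0 n ih
  have hup : ∀ m, J ≤ m → pairNorm Ω (1, m) + 1 ≤ pairNorm Ω (1, m + 2) := by
    intro m hm
    have := hupS m hm
    rw [hS] at this
    simp only [Set.mem_setOf_eq] at this
    linarith
  have hA : ∀ s m : ℕ, m + 2 * s ≤ J + 1 →
      pairNorm Ω (1, m + 2 * s) ≤ pairNorm Ω (1, m) + s := by
    intro s
    induction s with
    | zero => intro m _; simp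
    | succ n ih =>
      intro m hm
      rw [show m + 2 * (n + 1) = (m + 2) + 2 * n by omega]
      have h2 := ih (m + 2) (by omega)
      have h3 := hdown m (by omega)
      push_cast
      linarith
  have hB : ∀ s m : ℕ, J ≤ m →
      pairNorm Ω (1, m) + s ≤ pairNorm Ω (1, m + 2 * s) := by
    intro s
    induction s with
    | zero => intro m _; simp
    | succ n ih =>
      intro m hm
      rw [show m + 2 * (n + 1) = (m + 2) + 2 * n by omega]
      have h2 := ih (m + 2) (by omega)
      have h3 := hup m hm
      push_cast
      linarith
  -- the generic lower bound
  have lower : ∀ T : ℝ, (∀ q : ℕ, 2 ≤ q → 2 * q ≤ k + 1 → q ≤ ℓ →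
      min (k : ℝ) T ≤ (q : ℝ) - 1 + pairNorm Ω (1, k + 1 - 2 * q)) →
      min (k : ℝ) T ≤ Gcap Ω k (ℓ : ℕ∞) := by
    intro T hT
    apply le_Gcap hΩ hk hltop
    intro P hP
    obtain ⟨hP0, hidx, hwp, hlen⟩ := hP
    by_cases h2 : 2 ≤ Multiset.card P
    · obtain ⟨⟨p0, hp0, hp0i⟩, -⟩ := hwp h2
      have hcs := card_le_sum P hP0
      have h2q : 2 * Multiset.card P ≤ k + 1 := by omega
      have hqℓ : Multiset.card P ≤ ℓ := by exact_mod_cast hlen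
      have hlb := total_lb hΩ hP0 hidx rfl hp0 hp0i
      exact le_trans (hT _ h2 h2q hqℓ) hlb
    · have hc0 : Multiset.card P ≠ 0 := by
        intro hc
        rw [Multiset.card_eq_zero] at hc
        subst hc
        simp at hidx
      have hsum : (P.map fun p => p.1 + p.2).sum = k := by omega
      have hst := sum_le_totalNorm hΩ P
      rw [hsum] at hst
      exact le_trans (min_le_left _ _) hst
  -- the generic upper bounds
  have upperK : Gcap Ω k (ℓ : ℕ∞) ≤ (k : ℝ) := by
    have := Gcap_le hΩ (admissible_single (k := k) (ℓ : ℕ∞) hk hltop)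
    rwa [totalNorm_single hΩ] at this
  have upperC : ∀ q : ℕ, 1 ≤ q → 2 * q ≤ k + 1 → q ≤ ℓ →
      Gcap Ω k (ℓ : ℕ∞) ≤ pairNorm Ω (1, k + 1 - 2 * q) + ((q : ℝ) - 1) := by
    intro q h1 h2 h3
    have hadm := admissible_candidate (k := k) (q := q) (ℓ : ℕ∞) h2 h1 (by exact_mod_cast h3)
    have hle := Gcap_le hΩ hadm
    rw [totalNorm_candidate hΩ] at hle
    have hc : ((q - 1 : ℕ) : ℝ) = (q : ℝ) - 1 := by
      rw [Nat.cast_sub h1]; push_cast; ring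
    rw [hc] at hle
    exact hle
  refine ⟨?_, ?_, ?_, ?_⟩
  -- Case 1
  · intro h1
    have h2ℓ : 2 * ℓ ≤ k + 1 := by omega
    have hm0 : J ≤ k + 1 - 2 * ℓ := by omega
    apply le_antisymm
    · apply le_min upperK
      have := upperC ℓ hℓ h2ℓ le_rfl
      linarith
    · apply lower
      intro q hq2 hq2k hqℓ
      refine le_trans (min_le_right _ _) ?_
      have hBB := hB (ℓ - q) (k + 1 - 2 * ℓ) hm0
      rw [show k + 1 - 2 * ℓ + 2 * (ℓ - q) = k + 1 - 2 * q by omega] at hBB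
      have hc : ((ℓ - q : ℕ) : ℝ) = (ℓ : ℝ) - q := by
        rw [Nat.cast_sub hqℓ]
      rw [hc] at hBB
      linarith
  -- Case 2
  · intro h1 h2
    apply le_antisymm upperK
    have hlow := lower (k : ℝ) ?_
    · rwa [min_self] at hlow
    · intro q hq2 hq2k hqℓ
      rw [min_self]
      have hAA := hA (q - 1) (k + 1 - 2 * q) (by omega)
      rw [show k + 1 - 2 * q + 2 * (q - 1) = k - 1 by omega] at hAA
      have hge := pairNorm_ge hΩ 1 (k - 1)
      have c1 : ((k - 1 : ℕ) : ℝ) = (k : ℝ) - 1 := by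
        rw [Nat.cast_sub hk]; push_cast; ring
      have c2 : ((q - 1 : ℕ) : ℝ) = (q : ℝ) - 1 := by
        rw [Nat.cast_sub (by omega : 1 ≤ q)]; push_cast; ring
      rw [c1] at hge
      rw [c2] at hAA
      push_cast at hge
      linarith
  -- Case 3
  · intro h1 h2 h3
    obtain ⟨r, hr⟩ := h3
    have hkr : k = J + 2 * r + 1 := by omega
    have hck : (k : ℝ) = (J : ℝ) + 2 * r + 1 := by exact_mod_cast hkr
    apply le_antisymm
    · apply le_min upperK
      have h2q : 2 * (r + 1) ≤ k + 1 := by omega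
      have hqℓ : r + 1 ≤ ℓ := by omega
      have := upperC (r + 1) (by omega) h2q hqℓ
      rw [show k + 1 - 2 * (r + 1) = J by omega] at this
      push_cast at this
      linarith
    · apply lower
      intro q hq2 hq2k hqℓ
      refine le_trans (min_le_right _ _) ?_
      by_cases hqr : q ≤ r + 1
      · have hBB := hB (r + 1 - q) J le_rfl
        rw [show J + 2 * (r + 1 - q) = k + 1 - 2 * q by omega] at hBB
        have hc : ((r + 1 - q : ℕ) : ℝ) = (r : ℝ) + 1 - q := by
          rw [Nat.cast_sub hqr]; push_cast; ring
        rw [hc] at hBB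
        linarith
      · have hAA := hA (q - (r + 1)) (k + 1 - 2 * q) (by omega)
        rw [show k + 1 - 2 * q + 2 * (q - (r + 1)) = J by omega] at hAA
        have hc : ((q - (r + 1) : ℕ) : ℝ) = (q : ℝ) - (r + 1) := by
          rw [Nat.cast_sub (by omega : r + 1 ≤ q)]; push_cast; ring
        rw [hc] at hAA
        linarith
  -- Case 4
  · intro h1 h2 h3
    obtain ⟨r', hr'⟩ := h3
    obtain ⟨r, hkr⟩ : ∃ r, k = J + 2 * r + 2 := ⟨r' - 1, by omega⟩
    have hck : (k : ℝ) = (J : ℝ) + 2 * r + 2 := by exact_mod_cast hkr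
    apply le_antisymm
    · apply le_min upperK
      have h2q : 2 * (r + 1) ≤ k + 1 := by omega
      have hqℓ : r + 1 ≤ ℓ := by omega
      have := upperC (r + 1) (by omega) h2q hqℓ
      rw [show k + 1 - 2 * (r + 1) = J + 1 by omega] at this
      push_cast at this
      linarith
    · apply lower
      intro q hq2 hq2k hqℓ
      refine le_trans (min_le_right _ _) ?_
      by_cases hqr : q ≤ r + 1
      · have hBB := hB (r + 1 - q) (J + 1) (by omega)
        rw [show J + 1 + 2 * (r + 1 - q) = k + 1 - 2 * q by omega] at hBB
        have hc : ((r + 1 - q : ℕ) : ℝ) = (r : ℝ) + 1 - q := by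
          rw [Nat.cast_sub hqr]; push_cast; ring
        rw [hc] at hBB
        linarith
      · have hAA := hA (q - (r + 1)) (k + 1 - 2 * q) (by omega)
        rw [show k + 1 - 2 * q + 2 * (q - (r + 1)) = J + 1 by omega] at hAA
        have hc : ((q - (r + 1) : ℕ) : ℝ) = (q : ℝ) - (r + 1) := by
          rw [Nat.cast_sub (by omega : r + 1 ≤ q)]; push_cast; ring
        rw [hc] at hAA
        linarith
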